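/- (Tail estimate) Fix R > 0 and δ ∈ (0, μ−1). Then for all ξ ∈ ℝ, h > 0 and N ∈ ℕ: ∫_{{P₂ ≥ N·R²}} e^{−F_N^{(ξ)}(y)/(hN)} dy ≤ e^{−(ξ² + δ)·R²/(2h)}·Z_{h,N}(−δ), where Z_{h,N}(t) = ∫_{ℝ^{N−1}} e^{−(t·P₂(y) + Q(y))/(2hN)} dy. -/

import Mathlib

/-!
Completing the square, `P₄/4 + ξ P₃ + ξ² P₂ = ∑ₖ ((Ay)ₖ²/2 + ξ (Ay)ₖ)² ≥ 0` (as `|Ay| = |y|`), gives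
`2 F ≥ ξ² P₂ + Q`. On `P₂ ≥ N R²` this leaves `e^{-(ξ² + δ) R²/(2h)}` times the integrand
`e^{-(Q - δ P₂)/(2hN)}`, which is integrable since `Q ≥ (μ - 1) P₂` and `δ < μ - 1`.

The bound on `Q` is the discrete Poincaré inequality on `ℤ/N`: for mean-zero `x` the discrete
Fourier transform turns `∑ (x (k+1) - x k)²` into `N⁻¹ ∑ |e(k/N) - 1|² |x̂ k|²`, with `x̂ 0 = 0` and
`|e(k/N) - 1|² ≥ 4 sin² (π/N)` for `k ≠ 0`, which is exactly the normalisation of `Kd`.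
-/

open Real Finset Matrix MeasureTheory

noncomputable section

/-- The normalized discrete Laplacian with periodic boundary conditions. -/
def Kd (μ : ℝ) (N : ℕ) (hN : N ≠ 0) (x : Fin N → ℝ) : Fin N → ℝ :=
  haveI : NeZero N := ⟨hN⟩
  fun k => μ / (4 * Real.sin (π / N) ^ 2) * (2 * x k - x (k + 1) - x (k - 1))

/-- `Q(y) = ⟨Ay, K(Ay)⟩ − P₂(y)`. -/
def Q (μ : ℝ) (N : ℕ) (hN : N ≠ 0) (A : Matrix (Fin N) (Fin (N - 1)) ℝ)
    (y : Fin (N - 1) → ℝ) : ℝ :=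
  (∑ k, A.mulVec y k * Kd μ N hN (A.mulVec y) k) - ∑ i, y i ^ 2

/-- `F_N^{(ξ)}(y) = (1/4)P₄(y) + ξP₃(y) + (3/2)ξ²P₂(y) + (1/2)Q(y)`. -/
def F (μ : ℝ) (N : ℕ) (hN : N ≠ 0) (A : Matrix (Fin N) (Fin (N - 1)) ℝ) (ξ : ℝ)
    (y : Fin (N - 1) → ℝ) : ℝ :=
  (1 / 4 : ℝ) * ∑ k, A.mulVec y k ^ 4 + ξ * ∑ k, A.mulVec y k ^ 3
    + (3 / 2 : ℝ) * ξ ^ 2 * ∑ i, y i ^ 2 + (1 / 2 : ℝ) * Q μ N hN A y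

theorem Real.cos_two_pi_mul_div_le_cos_two_pi_div {m N : ℕ} (hm₀ : 0 < m) (hmN : m < N) :
    cos (2 * π * m / N) ≤ cos (2 * π / N) := by
  have hN : (0 : ℝ) < N := by exact_mod_cast hm₀.trans hmN
  wlog hm : 2 * m ≤ N generalizing m
  · have hsymm : 2 * π * (N - m : ℕ) / N = 2 * π - 2 * π * m / N := by
      rw [Nat.cast_sub hmN.le]
      field_simp
    rw [← cos_two_pi_sub, ← hsymm]
    exact this (by omega) (by omega) (by omega)
  have hm' : (2 * m : ℝ) ≤ N := by exact_mod_cast hm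
  have hm₀' : (1 : ℝ) ≤ m := by exact_mod_cast hm₀
  apply cos_le_cos_of_nonneg_of_le_pi (by positivity)
  · rw [div_le_iff₀ hN]; nlinarith [pi_pos]
  · rw [div_le_div_iff_of_pos_right hN]; nlinarith [pi_pos]

namespace ZMod
variable {N : ℕ} [NeZero N]
open scoped ComplexConjugate

theorem dft_comp_add (Φ : ZMod N → ℂ) (a k : ZMod N) :
    𝓕 (fun j ↦ Φ (j + a)) k = stdAddChar (a * k) * 𝓕 Φ k := by
  rw [dft_apply, dft_apply, Finset.mul_sum]
  refine Fintype.sum_equiv (Equiv.addRight a) _ _ fun j ↦ ?_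
  simp only [Equiv.coe_addRight, smul_eq_mul, ← mul_assoc, ← AddChar.map_add_eq_mul]
  ring_nf

theorem sum_normSq_dft (Φ : ZMod N → ℂ) :
    ∑ k, Complex.normSq (𝓕 Φ k) = N * ∑ j, Complex.normSq (Φ j) := by
  have hinv (j : ZMod N) : ∑ k, stdAddChar (k * j) * 𝓕 Φ k = N * Φ j := by
    have := invDFT_apply (𝓕 Φ) j
    rw [LinearEquiv.symm_apply_apply, smul_eq_mul] at this
    rw [this, ← mul_assoc, mul_inv_cancel₀ (NeZero.ne _), one_mul]
    rfl
  have hexpand (k : ZMod N) :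
      𝓕 Φ k * conj (𝓕 Φ k) = ∑ j, Φ j * conj (stdAddChar (k * j) * 𝓕 Φ k) := by
    nth_rewrite 1 [dft_apply]
    simp only [smul_eq_mul, Finset.sum_mul, map_mul, ← AddChar.map_neg_eq_conj, mul_comm k]
    exact Finset.sum_congr rfl fun j _ ↦ by ring
  apply Complex.ofReal_injective
  push_cast
  calc ∑ k, (Complex.normSq (𝓕 Φ k) : ℂ)
      = ∑ j, Φ j * conj (∑ k, stdAddChar (k * j) * 𝓕 Φ k) := by
        simp only [← Complex.mul_conj, hexpand, map_sum, Finset.mul_sum]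
        exact Finset.sum_comm
    _ = N * ∑ j, (Complex.normSq (Φ j) : ℂ) := by
        simp only [hinv, ← Complex.mul_conj, Finset.mul_sum, map_mul, map_natCast]
        exact Finset.sum_congr rfl fun j _ ↦ by ring

theorem four_mul_sin_sq_le_normSq_stdAddChar_sub_one {k : ZMod N} (hk : k ≠ 0) :
    4 * sin (π / N) ^ 2 ≤ Complex.normSq (stdAddChar k - 1) := by
  have hre : (stdAddChar k).re = cos (2 * π * k.val / N) := by
    rw [stdAddChar_apply, toCircle_eq_circleExp, Circle.coe_exp, Complex.exp_ofReal_mul_I_re]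
    ring_nf
  have hnorm : Complex.normSq (stdAddChar k) = 1 := by
    rw [Complex.normSq_eq_norm_sq, AddChar.norm_apply, one_pow]
  have hcos := Real.cos_two_pi_mul_div_le_cos_two_pi_div (Nat.pos_of_ne_zero ((val_ne_zero k).2 hk))
    (val_lt k)
  have hhalf : cos (2 * π / N) = 1 - 2 * sin (π / N) ^ 2 := by
    rw [← cos_sq_add_sin_sq (π / N), show 2 * π / N = 2 * (π / N) by ring, cos_two_mul']
    ring
  rw [Complex.normSq_sub, hnorm, map_one, map_one, mul_one]
  linarith

theorem four_mul_sin_sq_mul_sum_sq_le (x : ZMod N → ℝ) (hx : ∑ j, x j = 0) :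
    4 * sin (π / N) ^ 2 * ∑ j, x j ^ 2 ≤ ∑ j, (x (j + 1) - x j) ^ 2 := by
  set X : ZMod N → ℂ := fun j ↦ x j
  set D : ZMod N → ℂ := fun j ↦ ((x (j + 1) - x j : ℝ) : ℂ)
  have hD (k : ZMod N) : 𝓕 D k = (stdAddChar k - 1) * 𝓕 X k := by
    have : D = (fun j ↦ X (j + 1)) - X := by ext j; simp [D, X]
    rw [this, map_sub, Pi.sub_apply, dft_comp_add, one_mul]
    ring
  have hX₀ : 𝓕 X 0 = 0 := by
    rw [dft_apply_zero, ← Complex.ofReal_sum, hx, Complex.ofReal_zero]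
  have hterm (k : ZMod N) :
      4 * sin (π / N) ^ 2 * Complex.normSq (𝓕 X k) ≤ Complex.normSq (𝓕 D k) := by
    rw [hD, Complex.normSq_mul]
    rcases eq_or_ne k 0 with rfl | hk
    · simp [hX₀]
    · exact mul_le_mul_of_nonneg_right (four_mul_sin_sq_le_normSq_stdAddChar_sub_one hk)
        (Complex.normSq_nonneg _)
  have hsum := Finset.sum_le_sum fun k (_ : k ∈ univ) ↦ hterm k
  simp only [← Finset.mul_sum, sum_normSq_dft, X, D, Complex.normSq_ofReal, ← sq] at hsum
  have hN : (0 : ℝ) < N := by exact_mod_cast Nat.pos_of_ne_zero (NeZero.ne N)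
  nlinarith

end ZMod

theorem Fin.four_mul_sin_sq_mul_sum_sq_le {N : ℕ} [NeZero N] (x : Fin N → ℝ)
    (hx : ∑ k, x k = 0) :
    4 * sin (π / N) ^ 2 * ∑ k, x k ^ 2 ≤ ∑ k, (x (k + 1) - x k) ^ 2 := by
  let e := (ZMod.finEquiv N).symm
  have hsum (f : Fin N → ℝ) : ∑ j, f (e j) = ∑ k, f k := e.toEquiv.sum_comp f
  have key := ZMod.four_mul_sin_sq_mul_sum_sq_le (x ∘ e) (by rwa [← hsum] at hx)
  simpa only [Function.comp_apply, map_add, map_one, hsum fun k ↦ x k ^ 2,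
    hsum fun k ↦ (x (k + 1) - x k) ^ 2] using key

theorem Fintype.sum_mul_two_mul_sub_sub_eq_sum_sq_sub {G : Type*} [AddCommGroup G] [Fintype G]
    (v : G → ℝ) (a : G) :
    ∑ k, v k * (2 * v k - v (k + a) - v (k - a)) = ∑ k, (v (k + a) - v k) ^ 2 := by
  have hsq : ∑ k, v (k + a) ^ 2 = ∑ k, v k ^ 2 :=
    Equiv.sum_comp (Equiv.addRight a) fun k ↦ v k ^ 2
  have hmul : ∑ k, v k * v (k - a) = ∑ k, v (k + a) * v k := by
    rw [← Equiv.sum_comp (Equiv.addRight a)]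
    simp only [Equiv.coe_addRight, add_sub_cancel_right]
  calc ∑ k, v k * (2 * v k - v (k + a) - v (k - a))
      = ∑ k, (2 * v k ^ 2 - v (k + a) * v k - v k * v (k - a)) :=
        Finset.sum_congr rfl fun k _ ↦ by ring
    _ = ∑ k, (v (k + a) ^ 2 - 2 * (v (k + a) * v k) + v k ^ 2) := by
        simp only [sum_add_distrib, sum_sub_distrib, ← mul_sum, hsq, hmul]
        ring
    _ = ∑ k, (v (k + a) - v k) ^ 2 := Finset.sum_congr rfl fun k _ ↦ by ring

theorem Matrix.sum_sq_mulVec_of_transpose_mul_self {m n R : Type*} [Fintype m] [Fintype n]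
    [DecidableEq n] [CommSemiring R] {A : Matrix m n R} (hA : Aᵀ * A = 1) (y : n → R) :
    ∑ k, (A *ᵥ y) k ^ 2 = ∑ i, y i ^ 2 := by
  simp only [sq]
  change A *ᵥ y ⬝ᵥ A *ᵥ y = y ⬝ᵥ y
  rw [dotProduct_mulVec, ← vecMul_transpose, vecMul_vecMul, hA, vecMul_one]

section Energy

variable {μ : ℝ} {N : ℕ} {A : Matrix (Fin N) (Fin (N - 1)) ℝ}

theorem sub_one_mul_sum_sq_le_Q (hμ : 0 ≤ μ) (hN : 2 ≤ N) (hA : Aᵀ * A = 1)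
    (hmean : ∀ y : Fin (N - 1) → ℝ, ∑ k, A.mulVec y k = 0) (y : Fin (N - 1) → ℝ) :
    (μ - 1) * ∑ i, y i ^ 2 ≤ Q μ N (Nat.ne_zero_of_lt hN) A y := by
  have hN₀ : N ≠ 0 := Nat.ne_zero_of_lt hN
  have : NeZero N := ⟨hN₀⟩
  set v := A *ᵥ y
  have hsin : 0 < sin (π / N) :=
    sin_pos_of_pos_of_lt_pi (by positivity) (div_lt_self pi_pos (by exact_mod_cast hN))
  have hKd : ∑ k, v k * Kd μ N hN₀ v k
      = μ / (4 * sin (π / N) ^ 2) * ∑ k, (v (k + 1) - v k) ^ 2 := by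
    rw [← Fintype.sum_mul_two_mul_sub_sub_eq_sum_sq_sub, mul_sum]
    exact sum_congr rfl fun k _ ↦ by simp only [Kd]; ring
  have hv : ∑ k, v k ^ 2 = ∑ i, y i ^ 2 := sum_sq_mulVec_of_transpose_mul_self hA y
  have hquad : μ * ∑ i, y i ^ 2 ≤ ∑ k, v k * Kd μ N hN₀ v k :=
    calc μ * ∑ i, y i ^ 2
        = μ / (4 * sin (π / N) ^ 2) * (4 * sin (π / N) ^ 2 * ∑ k, v k ^ 2) := by
          rw [hv]; field_simp
      _ ≤ _ := by
          rw [hKd]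
          exact mul_le_mul_of_nonneg_left (Fin.four_mul_sin_sq_mul_sum_sq_le v (hmean y))
            (by positivity)
  rw [Q]
  linarith

theorem sq_mul_sum_sq_add_Q_le_two_mul_F (hN₀ : N ≠ 0) (hA : Aᵀ * A = 1) (ξ : ℝ)
    (y : Fin (N - 1) → ℝ) :
    ξ ^ 2 * ∑ i, y i ^ 2 + Q μ N hN₀ A y ≤ 2 * F μ N hN₀ A ξ y := by
  rw [F]
  set v := A *ᵥ y
  -- `v⁴/4 + ξ v³ + ξ² v²` is the square `(v²/2 + ξ v)²`.
  have hsq : ∑ k, (v k ^ 2 / 2 + ξ * v k) ^ 2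
      = 1 / 4 * ∑ k, v k ^ 4 + ξ * ∑ k, v k ^ 3 + ξ ^ 2 * ∑ k, v k ^ 2 := by
    simp only [mul_sum, ← sum_add_distrib]
    exact sum_congr rfl fun k _ ↦ by ring
  have hnonneg : 0 ≤ ∑ k, (v k ^ 2 / 2 + ξ * v k) ^ 2 := sum_nonneg fun k _ ↦ sq_nonneg _
  rw [sum_sq_mulVec_of_transpose_mul_self hA y] at hsq
  linarith

theorem continuous_Q (hN₀ : N ≠ 0) : Continuous (Q μ N hN₀ A) := by
  unfold Q Kd
  fun_prop

end Energy

theorem integrable_exp_neg_mul_sum_sq {ι : Type*} [Fintype ι] {b : ℝ} (hb : 0 < b) :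
    Integrable fun y : ι → ℝ ↦ exp (-(b * ∑ i, y i ^ 2)) := by
  refine (Integrable.fintype_prod fun _ : ι ↦ integrable_exp_neg_mul_sq hb).congr
    (ae_of_all _ fun y ↦ ?_)
  simp only [← exp_sum, mul_sum, ← sum_neg_distrib, neg_mul]

theorem MeasureTheory.setIntegral_le_mul_integral_of_le_mul {α : Type*} [MeasurableSpace α]
    {ν : Measure α} {s : Set α} (hs : MeasurableSet s) {f g : α → ℝ} {c : ℝ} (hc : 0 ≤ c)
    (hf : ∀ x ∈ s, 0 ≤ f x) (hg : Integrable g ν) (hg₀ : ∀ x, 0 ≤ g x)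
    (hfg : ∀ x ∈ s, f x ≤ c * g x) :
    ∫ x in s, f x ∂ν ≤ c * ∫ x, g x ∂ν :=
  calc ∫ x in s, f x ∂ν
      ≤ ∫ x in s, c * g x ∂ν :=
        integral_mono_of_nonneg ((ae_restrict_iff' hs).2 (ae_of_all _ hf))
          (hg.const_mul c).restrict ((ae_restrict_iff' hs).2 (ae_of_all _ hfg))
    _ = c * ∫ x in s, g x ∂ν := integral_const_mul c g
    _ ≤ c * ∫ x, g x ∂ν :=
        mul_le_mul_of_nonneg_left (setIntegral_le_integral hg (ae_of_all _ hg₀)) hc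

/-- Tail estimate: for `0 < δ < μ − 1` and `R > 0`,
`∫_{P₂ ≥ NR²} e^{−F_N^{(ξ)}/(hN)} dy ≤ e^{−(ξ²+δ)R²/(2h)} Z_{h,N}(−δ)`. -/
theorem stmt_13 (μ : ℝ) (R δ : ℝ) (hδ : 0 < δ) (hδμ : δ < μ - 1) :
    ∀ N : ℕ, ∀ hN : 2 ≤ N,
      ∀ A : Matrix (Fin N) (Fin (N - 1)) ℝ, Aᵀ * A = 1 →
      (∀ y : Fin (N - 1) → ℝ, ∑ k, A.mulVec y k = 0) →
      ∀ ξ : ℝ, ∀ h : ℝ, 0 < h →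
        (∫ y in {y : Fin (N - 1) → ℝ | N * R ^ 2 ≤ ∑ i, y i ^ 2},
            Real.exp (-(F μ N (by omega) A ξ y) / (h * N)))
          ≤ Real.exp (-((ξ ^ 2 + δ) * R ^ 2) / (2 * h)) *
            ∫ y : Fin (N - 1) → ℝ,
              Real.exp (-((-δ) * ∑ i, y i ^ 2 + Q μ N (by omega) A y) / (2 * h * N)) := by
  intro N hN A hA hmean ξ h hh
  have hN₀ : N ≠ 0 := by omega
  have hQ := sub_one_mul_sum_sq_le_Q (μ := μ) (by linarith) hN hA hmean
  have hF := sq_mul_sum_sq_add_Q_le_two_mul_F (μ := μ) hN₀ hA ξ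
  refine setIntegral_le_mul_integral_of_le_mul
    (measurableSet_le measurable_const (by fun_prop)) (exp_pos _).le (fun _ _ ↦ (exp_pos _).le)
    ?_ (fun _ ↦ (exp_pos _).le) fun y hy ↦ ?_
  · -- `Q ≥ (μ - 1) P₂` dominates the integrand by a Gaussian.
    have hb : 0 < (μ - 1 - δ) / (2 * h * N) := by apply div_pos <;> [linarith; positivity]
    have hQc := continuous_Q (μ := μ) (A := A) hN₀
    refine (integrable_exp_neg_mul_sum_sq hb).mono'
      (by fun_prop : Continuous _).aestronglyMeasurable (ae_of_all _ fun y ↦ ?_)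
    rw [norm_of_nonneg (exp_pos _).le, exp_le_exp, neg_div, neg_le_neg_iff, ← mul_div_right_comm,
      div_le_div_iff_of_pos_right (by positivity)]
    linarith [hQ y]
  · have hP : (ξ ^ 2 + δ) * (N * R ^ 2) ≤ (ξ ^ 2 + δ) * ∑ i, y i ^ 2 :=
      mul_le_mul_of_nonneg_left hy (by positivity)
    rw [← exp_add, exp_le_exp]
    field_simp
    linarith [hF y]
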